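/- Let X be a Banach space and (U_n)_{n∈ℕ} a countable family of bounded nonempty subsets of X, with countable subsets A_n ⊆ U_n. Then there exist countable sets Ã_n with A_n ⊆ Ã_n ⊆ U_n such that for all n, m ∈ ℕ, the Hausdorff distance satisfies ρ_H(Ã_n, Ã_m) ≤ ρ_H(U_n, U_m). -/

import Mathlib

/-!
Close the given countable sets `A n` under countably many "almost nearest point" selections:
for each point `b` already chosen, each index `n` and each `j`, add a point of `U n` at distance
less than `infDist b (U n) + 1/(j+1)` from `b`. The closure of a countable set under countably
many maps is countable, and in the resulting sets `Ã n` every `b ∈ Ã m` satisfies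
`infDist b (Ã n) ≤ infDist b (U n)`, which bounds each one-sided distance by the one of the `U`'s.
-/

open Metric Set

/-- The one-sided Hausdorff distance `ρ̄_H(A,B) = sup_{b ∈ B} inf_{a ∈ A} ‖a - b‖`. -/
noncomputable def rhoBar {X : Type*} [NormedAddCommGroup X] (A B : Set X) : ℝ :=
  ⨆ b : B, ⨅ a : A, ‖(a : X) - (b : X)‖

/-- The Hausdorff distance between bounded nonempty sets. -/
noncomputable def rhoH {X : Type*} [NormedAddCommGroup X] (A B : Set X) : ℝ :=
  max (rhoBar A B) (rhoBar B A)

theorem Set.Countable.exists_superset_subset_mapsTo {α κ : Type*} [Countable κ]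
    {s u : Set α} (hs : s.Countable) (hsu : s ⊆ u) (g : κ → α → α)
    (hg : ∀ k, MapsTo (g k) u u) :
    ∃ t, s ⊆ t ∧ t ⊆ u ∧ t.Countable ∧ ∀ k, MapsTo (g k) t t := by
  refine ⟨⋃ w : List κ, (fun x => w.foldr g x) '' s, ?_, ?_, ?_, ?_⟩
  · exact fun x hx => mem_iUnion.2 ⟨[], x, hx, rfl⟩
  · simp only [iUnion_subset_iff, image_subset_iff]
    intro w x hx
    induction w with
    | nil => exact hsu hx
    | cons k w ih => exact hg k ih
  · exact countable_iUnion fun w => hs.image _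
  · rintro k _ ⟨_, ⟨w, rfl⟩, x, hx, rfl⟩
    exact mem_iUnion.2 ⟨k :: w, x, hx, List.foldr_cons⟩

theorem exists_countable_family_infDist_le {α ι : Type*} [PseudoMetricSpace α] [Countable ι]
    (U : ι → Set α) (hU : ∀ n, (U n).Nonempty) (A : ι → Set α) (hAU : ∀ n, A n ⊆ U n)
    (hAc : ∀ n, (A n).Countable) :
    ∃ Atil : ι → Set α, (∀ n, A n ⊆ Atil n) ∧ (∀ n, Atil n ⊆ U n) ∧
      (∀ n, (Atil n).Countable) ∧
      ∀ n m, ∀ b ∈ Atil m, infDist b (Atil n) ≤ infDist b (U n) := by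
  have hnear : ∀ (b : α) (n : ι) (j : ℕ), ∃ a ∈ U n,
      dist b a < infDist b (U n) + 1 / (j + 1) := fun b n j =>
    (infDist_lt_iff (hU n)).1 (lt_add_of_pos_right _ (by positivity))
  choose f hfU hfd using hnear
  -- Points are tagged with their index, so that a single closure handles the whole family.
  obtain ⟨t, hst, htu, htc, hgt⟩ :=
    (countable_iUnion fun n => (hAc n).image (Prod.mk n)).exists_superset_subset_mapsTo
      (u := {p : ι × α | p.2 ∈ U p.1})
      (iUnion_subset fun n => image_subset_iff.2 (hAU n))
      (fun (k : ι × ℕ) (p : ι × α) => (k.1, f p.2 k.1 k.2))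
      (fun k p _ => hfU p.2 k.1 k.2)
  refine ⟨fun n => Prod.mk n ⁻¹' t, fun n x hx => hst (mem_iUnion.2 ⟨n, x, hx, rfl⟩),
    fun n x hx => htu hx, fun n => htc.preimage (Prod.mk_right_injective n), ?_⟩
  intro n m b hb
  refine le_of_forall_pos_le_add fun ε hε => ?_
  obtain ⟨j, hj⟩ := exists_nat_one_div_lt hε
  calc infDist b (Prod.mk n ⁻¹' t) ≤ dist b (f b n j) :=
        infDist_le_dist_of_mem (hgt (n, j) hb)
    _ ≤ infDist b (U n) + ε := by linarith [hfd b n j]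

theorem bddAbove_range_infDist {α : Type*} [PseudoMetricSpace α] {s t : Set α}
    (hs : Bornology.IsBounded s) (ht : Bornology.IsBounded t) :
    BddAbove (range fun b : t => infDist (b : α) s) := by
  rcases s.eq_empty_or_nonempty with rfl | ⟨a, ha⟩
  · simp only [infDist_empty]
    exact ⟨0, by rintro _ ⟨_, rfl⟩; rfl⟩
  obtain ⟨C, hC⟩ := isBounded_iff.1 (hs.union ht)
  refine ⟨C, ?_⟩
  rintro _ ⟨b, rfl⟩
  exact (infDist_le_dist_of_mem ha).trans (hC (Or.inr b.2) (Or.inl ha))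

theorem rhoBar_eq_iSup_infDist {X : Type*} [NormedAddCommGroup X] (A B : Set X) :
    rhoBar A B = ⨆ b : B, infDist (b : X) A := by
  refine iSup_congr fun b => ?_
  rw [infDist_eq_iInf]
  exact iInf_congr fun a => by rw [dist_eq_norm, norm_sub_rev]

theorem rhoBar_le_rhoBar {X : Type*} [NormedAddCommGroup X] {A A' B B' : Set X}
    (hA : Bornology.IsBounded A) (hB : Bornology.IsBounded B) (hB' : B' ⊆ B)
    (h : ∀ b ∈ B', infDist b A' ≤ infDist b A) : rhoBar A' B' ≤ rhoBar A B := by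
  rw [rhoBar_eq_iSup_infDist, rhoBar_eq_iSup_infDist]
  exact Real.iSup_le
    (fun b => (h b b.2).trans (le_ciSup (bddAbove_range_infDist hA hB) ⟨b, hB' b.2⟩))
    (Real.iSup_nonneg fun _ => infDist_nonneg)

theorem stmt5_general {X : Type*} [NormedAddCommGroup X]
    (U : ℕ → Set X) (hU : ∀ n, (U n).Nonempty) (hUb : ∀ n, Bornology.IsBounded (U n))
    (A : ℕ → Set X) (hAU : ∀ n, A n ⊆ U n) (hAc : ∀ n, (A n).Countable) :
    ∃ Atil : ℕ → Set X, (∀ n, A n ⊆ Atil n) ∧ (∀ n, Atil n ⊆ U n) ∧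
      (∀ n, (Atil n).Countable) ∧
      ∀ n m : ℕ, rhoH (Atil n) (Atil m) ≤ rhoH (U n) (U m) := by
  obtain ⟨Atil, hAAtil, hAtilU, hAtilc, hinf⟩ :=
    exists_countable_family_infDist_le U hU A hAU hAc
  exact ⟨Atil, hAAtil, hAtilU, hAtilc, fun n m => max_le_max
    (rhoBar_le_rhoBar (hUb n) (hUb m) (hAtilU m) (hinf n m))
    (rhoBar_le_rhoBar (hUb m) (hUb n) (hAtilU n) (hinf m n))⟩

/-- for a countable family of bounded nonempty sets `U n` with countable
subsets `A n ⊆ U n`, there are countable sets `Ã n` with `A n ⊆ Ã n ⊆ U n` and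
`ρ_H(Ã n, Ã m) ≤ ρ_H(U n, U m)` for all `n, m`. -/
theorem stmt5 {X : Type*} [NormedAddCommGroup X] [NormedSpace ℝ X] [CompleteSpace X]
    (U : ℕ → Set X) (hU : ∀ n, (U n).Nonempty) (hUb : ∀ n, Bornology.IsBounded (U n))
    (A : ℕ → Set X) (hAU : ∀ n, A n ⊆ U n) (hAc : ∀ n, (A n).Countable) :
    ∃ Atil : ℕ → Set X, (∀ n, A n ⊆ Atil n) ∧ (∀ n, Atil n ⊆ U n) ∧
      (∀ n, (Atil n).Countable) ∧
      ∀ n m : ℕ, rhoH (Atil n) (Atil m) ≤ rhoH (U n) (U m) :=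
  stmt5_general U hU hUb A hAU hAc
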